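/- Suppose φ̄ : (Fin n → ℝ) → ℝ is continuously differentiable and satisfies the steady-state HJB equation with state cost m (continuous), i.e. for all x: ∇φ̄(x) ⬝ᵥ f(x) − (1/4)·((g x)ᵀ.mulVec (∇φ̄ x)) ⬝ᵥ (R⁻¹.mulVec ((g x)ᵀ.mulVec (∇φ̄ x))) + m(x) = 0. Let g be continuous, let v : ℝ → (Fin p → ℝ) be continuous, and let x : ℝ → (Fin n → ℝ) be continuously differentiable and solve x'(t) = f(x(t)) − (1/2)·(g (x t)).mulVec (R⁻¹.mulVec ((g (x t))ᵀ.mulVec (∇φ̄ (x t)))) + (g (x t)).mulVec (v t) for all t. Then for all t₀ ≤ t₁, the dissipation inequality holds: φ̄(x(t₁)) − φ̄(x(t₀)) ≤ ∫_{t₀}^{t₁} ( −m(x(t)) + ‖v(t)‖²_R ) dt. -/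

import Mathlib

/-!
Along the trajectory, `d/dt φ̄(x t) = ∇φ̄ ⬝ ẋ`. With `w = gᵀ ∇φ̄`, the HJB equation turns this into
`-m + w ⬝ v - ¼ w ⬝ R⁻¹ w`, and completing the square in the `R`-norm,
`0 ≤ ‖v - ½ R⁻¹ w‖²_R`, bounds it by the supply rate `-m + ‖v‖²_R`. Integrating the bound
(the fundamental theorem of calculus in its monotone form) gives the dissipation inequality.
-/

open Matrix

/-- Euclidean gradient of a scalar function on `Fin n → ℝ`:
the vector of partial derivatives. -/
noncomputable def grad {n : ℕ} (φ : (Fin n → ℝ) → ℝ) (x : Fin n → ℝ) : Fin n → ℝ :=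
  fun i => fderiv ℝ φ x (Pi.single i 1)

/-- `R`-weighted squared norm `‖u‖²_R = u ⬝ᵥ R.mulVec u`. -/
def sqR {p : ℕ} (R : Matrix (Fin p) (Fin p) ℝ) (u : Fin p → ℝ) : ℝ :=
  u ⬝ᵥ R.mulVec u

theorem fderiv_apply_eq_grad_dotProduct {n : ℕ} (φ : (Fin n → ℝ) → ℝ) (y u : Fin n → ℝ) :
    fderiv ℝ φ y u = grad φ y ⬝ᵥ u := by
  conv_lhs => rw [← Finset.univ_sum_single u]
  simp only [map_sum, grad, dotProduct]
  refine Finset.sum_congr rfl fun i _ => ?_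
  rw [mul_comm, ← smul_eq_mul, ← map_smul, ← Pi.single_smul', smul_eq_mul, mul_one]

theorem DifferentiableAt.hasDerivAt_comp_grad {n : ℕ} {φ : (Fin n → ℝ) → ℝ}
    {x : ℝ → Fin n → ℝ} {x' : Fin n → ℝ} {t : ℝ} (hφ : DifferentiableAt ℝ φ (x t))
    (hx : HasDerivAt x x' t) :
    HasDerivAt (fun s => φ (x s)) (grad φ (x t) ⬝ᵥ x') t := by
  rw [← fderiv_apply_eq_grad_dotProduct]
  exact hφ.hasFDerivAt.comp_hasDerivAt t hx

theorem Matrix.PosSemidef.mulVec_dotProduct_le {ι : Type*} [Fintype ι]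
    {R : Matrix ι ι ℝ} (hR : R.PosSemidef) (y u : ι → ℝ) :
    R *ᵥ y ⬝ᵥ u ≤ u ⬝ᵥ R *ᵥ u + 1 / 4 * (y ⬝ᵥ R *ᵥ y) := by
  have hsymm : y ⬝ᵥ R *ᵥ u = R *ᵥ y ⬝ᵥ u := by
    have hT : R.IsSymm := by simpa using hR.isHermitian
    rw [dotProduct_mulVec, ← mulVec_transpose, hT.eq]
  have hsq := hR.dotProduct_mulVec_nonneg (u - (1 / 2 : ℝ) • y)
  simp only [star_trivial, mulVec_sub, mulVec_smul, sub_dotProduct, dotProduct_sub,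
    smul_dotProduct, dotProduct_smul, smul_eq_mul, hsymm, dotProduct_comm u (R *ᵥ y)] at hsq
  linarith

theorem Matrix.PosDef.dotProduct_le_sqR_add_inv {p : ℕ} {R : Matrix (Fin p) (Fin p) ℝ}
    (hR : R.PosDef) (w u : Fin p → ℝ) :
    w ⬝ᵥ u ≤ sqR R u + 1 / 4 * (w ⬝ᵥ R⁻¹ *ᵥ w) := by
  have hw : R *ᵥ R⁻¹ *ᵥ w = w := by
    rw [mulVec_mulVec, mul_nonsing_inv _ ((isUnit_iff_isUnit_det R).1 hR.isUnit), one_mulVec]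
  simpa only [sqR, hw, dotProduct_comm (R⁻¹ *ᵥ w) w] using
    hR.posSemidef.mulVec_dotProduct_le (R⁻¹ *ᵥ w) u

theorem dotProduct_closedLoop_le_supply {n p : ℕ} {R : Matrix (Fin p) (Fin p) ℝ} (hR : R.PosDef)
    (a fx : Fin n → ℝ) (G : Matrix (Fin n) (Fin p) ℝ) (mx : ℝ)
    (hHJB : a ⬝ᵥ fx - 1 / 4 * (Gᵀ *ᵥ a ⬝ᵥ R⁻¹ *ᵥ Gᵀ *ᵥ a) + mx = 0) (u : Fin p → ℝ) :
    a ⬝ᵥ (fx - (1 / 2 : ℝ) • G *ᵥ R⁻¹ *ᵥ Gᵀ *ᵥ a + G *ᵥ u) ≤ -mx + sqR R u := by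
  have hadj : ∀ z, a ⬝ᵥ G *ᵥ z = Gᵀ *ᵥ a ⬝ᵥ z := fun z => by
    rw [dotProduct_mulVec, mulVec_transpose]
  have hyoung := hR.dotProduct_le_sqR_add_inv (Gᵀ *ᵥ a) u
  rw [dotProduct_add, dotProduct_sub, dotProduct_smul, hadj, hadj, smul_eq_mul]
  linarith

theorem stmt_13_general {n p : ℕ}
    (f : (Fin n → ℝ) → (Fin n → ℝ))
    (g : (Fin n → ℝ) → Matrix (Fin n) (Fin p) ℝ)
    (R : Matrix (Fin p) (Fin p) ℝ)
    (hRpd : R.PosDef)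
    (m : (Fin n → ℝ) → ℝ) (hm : Continuous m)
    (φb : (Fin n → ℝ) → ℝ)
    (hφ : ContDiff ℝ 1 φb)
    (hHJB : ∀ x, grad φb x ⬝ᵥ f x
        - (1/4) * ((g x)ᵀ.mulVec (grad φb x) ⬝ᵥ R⁻¹.mulVec ((g x)ᵀ.mulVec (grad φb x)))
        + m x = 0)
    (v : ℝ → (Fin p → ℝ)) (hv : Continuous v)
    (x : ℝ → (Fin n → ℝ))
    (hx : ∀ t, HasDerivAt x
      (f (x t) - (1/2 : ℝ) • (g (x t)).mulVec (R⁻¹.mulVec ((g (x t))ᵀ.mulVec (grad φb (x t))))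
        + (g (x t)).mulVec (v t)) t) :
    ∀ t₀ t₁ : ℝ, t₀ ≤ t₁ →
      φb (x t₁) - φb (x t₀) ≤ ∫ t in t₀..t₁, (-(m (x t)) + sqR R (v t)) := by
  intro t₀ t₁ ht
  have hφd : Differentiable ℝ φb := hφ.differentiable one_ne_zero
  have hxc : Continuous x := continuous_iff_continuousAt.2 fun t => (hx t).continuousAt
  have hsupply : Continuous fun t => -(m (x t)) + sqR R (v t) := by
    unfold sqR; fun_prop
  exact intervalIntegral.sub_le_integral_of_hasDeriv_right_of_le ht
    (hφd.continuous.comp hxc).continuousOn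
    (fun t _ => ((hφd (x t)).hasDerivAt_comp_grad (hx t)).hasDerivWithinAt)
    hsupply.integrableOn_Icc
    fun t _ => dotProduct_closedLoop_le_supply hRpd _ _ _ _ (hHJB (x t)) (v t)

theorem stmt_13 {n p : ℕ}
    (f : (Fin n → ℝ) → (Fin n → ℝ))
    (g : (Fin n → ℝ) → Matrix (Fin n) (Fin p) ℝ)
    (hg : Continuous g)
    (R : Matrix (Fin p) (Fin p) ℝ)
    (hRsymm : R.IsSymm) (hRpd : R.PosDef)
    (m : (Fin n → ℝ) → ℝ) (hm : Continuous m)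
    (φb : (Fin n → ℝ) → ℝ)
    (hφ : ContDiff ℝ 1 φb)
    (hHJB : ∀ x, grad φb x ⬝ᵥ f x
        - (1/4) * ((g x)ᵀ.mulVec (grad φb x) ⬝ᵥ R⁻¹.mulVec ((g x)ᵀ.mulVec (grad φb x)))
        + m x = 0)
    (v : ℝ → (Fin p → ℝ)) (hv : Continuous v)
    (x : ℝ → (Fin n → ℝ)) (hxC1 : ContDiff ℝ 1 x)
    (hx : ∀ t, HasDerivAt x
      (f (x t) - (1/2 : ℝ) • (g (x t)).mulVec (R⁻¹.mulVec ((g (x t))ᵀ.mulVec (grad φb (x t))))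
        + (g (x t)).mulVec (v t)) t) :
    ∀ t₀ t₁ : ℝ, t₀ ≤ t₁ →
      φb (x t₁) - φb (x t₀) ≤ ∫ t in t₀..t₁, (-(m (x t)) + sqR R (v t)) :=
  stmt_13_general f g R hRpd m hm φb hφ hHJB v hv x hx
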